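/- For a rational matrix R ∈ k(x)^{m×p} and ℓ ≥ 0, φ_ℓ(R) divides φ_{ℓ+1}(R); moreover φ_ℓ(R) divides φ_1(R)^ℓ. -/
import Mathlib


open Polynomial

/-- The determinantal denominator `φ_ℓ(R)`: the monic least common denominator in `k[x]`
of all minors of the rational matrix `R` of size at most `ℓ` (with `φ_0(R) = 1`). -/
noncomputable def detDen {k : Type*} [Field k] [DecidableEq k] {m p : ℕ} (ℓ : ℕ)
    (R : Matrix (Fin m) (Fin p) (RatFunc k)) : Polynomial k :=
  (Finset.univ : Finset (Σ s : Fin (ℓ + 1), (Fin (s : ℕ) → Fin m) × (Fin (s : ℕ) → Fin p))).lcm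
    (fun t => ((R.submatrix t.2.1 t.2.2).det).denom)

lemma detDen_ne_zero {k : Type*} [Field k] [DecidableEq k] {m p : ℕ} (ℓ : ℕ)
    (R : Matrix (Fin m) (Fin p) (RatFunc k)) : detDen ℓ R ≠ 0 := by
  unfold detDen
  rw [Ne, Finset.lcm_eq_zero_iff]
  rintro ⟨t, -, h⟩
  exact RatFunc.denom_ne_zero ((R.submatrix t.2.1 t.2.2).det) h

lemma denom_det_submatrix_dvd {k : Type*} [Field k] [DecidableEq k] {m p n : ℕ}
    (R : Matrix (Fin m) (Fin p) (RatFunc k)) (D : Polynomial k) (hD : D ≠ 0)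
    (hE : ∀ i j, (R i j).denom ∣ D) (r : Fin n → Fin m) (c : Fin n → Fin p) :
    ((R.submatrix r c).det).denom ∣ D ^ n := by
  have hD' : algebraMap (Polynomial k) (RatFunc k) D ≠ 0 := by simpa using hD
  have hP : ∀ i j, ∃ q : Polynomial k,
      R i j = algebraMap _ _ q / algebraMap _ _ D := fun i j =>
    (RatFunc.denom_dvd hD).mp (hE i j)
  choose P hPe using hP
  set N : Matrix (Fin n) (Fin n) (Polynomial k) :=
    Matrix.of fun a b => P (r a) (c b) with hN
  have key : N.map (algebraMap (Polynomial k) (RatFunc k)) =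
      Matrix.of fun a b =>
        algebraMap (Polynomial k) (RatFunc k) D * (R.submatrix r c) a b := by
    ext a b
    simp only [Matrix.map_apply, Matrix.submatrix_apply, hN, Matrix.of_apply, hPe]
    rw [mul_div_assoc', mul_comm, mul_div_assoc, div_self hD', mul_one]
  rw [RatFunc.denom_dvd (pow_ne_zero n hD)]
  refine ⟨N.det, ?_⟩
  have hdet := congrArg Matrix.det key
  rw [Matrix.det_mul_row, Finset.prod_const, Finset.card_univ, Fintype.card_fin] at hdet
  have hdet2 : algebraMap (Polynomial k) (RatFunc k) N.det =
      (algebraMap (Polynomial k) (RatFunc k) D) ^ n * (R.submatrix r c).det := by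
    rw [RingHom.map_det]; exact hdet
  rw [eq_div_iff (by rw [map_pow]; exact pow_ne_zero n hD'), hdet2, map_pow, mul_comm]

lemma denom_entry_dvd_detDen_one {k : Type*} [Field k] [DecidableEq k] {m p : ℕ}
    (R : Matrix (Fin m) (Fin p) (RatFunc k)) (i : Fin m) (j : Fin p) :
    (R i j).denom ∣ detDen 1 R := by
  unfold detDen
  have h := Finset.dvd_lcm (f := fun t : Σ s : Fin 2,
      (Fin (s : ℕ) → Fin m) × (Fin (s : ℕ) → Fin p) =>
      ((R.submatrix t.2.1 t.2.2).det).denom)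
    (Finset.mem_univ ⟨(1 : Fin 2), (fun _ => i, fun _ => j)⟩)
  simpa [Matrix.det_fin_one] using h

/-- φ_ℓ(R) divides φ_{ℓ+1}(R), and φ_ℓ(R) divides φ_1(R)^ℓ. -/
theorem detDen_dvd_succ_and_pow (k : Type*) [Field k] [DecidableEq k] (m p : ℕ)
    (R : Matrix (Fin m) (Fin p) (RatFunc k)) (ℓ : ℕ) :
    detDen ℓ R ∣ detDen (ℓ + 1) R ∧ detDen ℓ R ∣ (detDen 1 R) ^ ℓ := by
  constructor
  · unfold detDen
    apply Finset.lcm_dvd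
    rintro ⟨s, rc⟩ -
    have h := Finset.dvd_lcm (f := fun t : Σ s : Fin (ℓ + 2),
        (Fin (s : ℕ) → Fin m) × (Fin (s : ℕ) → Fin p) =>
        ((R.submatrix t.2.1 t.2.2).det).denom)
      (Finset.mem_univ ⟨s.castSucc, rc⟩)
    exact h
  · have hE : ∀ i j, (R i j).denom ∣ detDen 1 R := denom_entry_dvd_detDen_one R
    conv_lhs => rw [detDen]
    apply Finset.lcm_dvd
    rintro ⟨s, rc⟩ -
    exact (denom_det_submatrix_dvd R _ (detDen_ne_zero 1 R) hE rc.1 rc.2).trans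
      (pow_dvd_pow _ (Fin.is_le s))
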